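/- Let A, B partition [N]^3 and suppose both |π_XY(A)| ≤ (3/4)N² and |π_XY(B)| ≤ (3/4)N². For each z ∈ [N], defining A_Xz = {x : ∀y, (x,y,z) ∈ A}, B_Xz = {x : ∀y, (x,y,z) ∈ B}, A_Yz = {y : ∀x, (x,y,z) ∈ A}, B_Yz = {y : ∀x, (x,y,z) ∈ B}, one has |A_Xz| + |B_Xz| + |A_Yz| + |B_Yz| ≤ N. -/

import Mathlib

/-!
Fix a slice `z`: `A_Xz` indexes the lines `{x} × [N] × {z}` contained in `A`, and `A_Yz` the
lines `[N] × {y} × {z}`. The XY-projection of `A` contains the cross `A_Xz × [N] ∪ [N] × A_Yz`,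
of size `N² - (N - |A_Xz|)(N - |A_Yz|)`, so the projection bound gives
`(N - |A_Xz|)(N - |A_Yz|) ≥ N²/4` and AM-GM gives `|A_Xz| + |A_Yz| ≤ N`; likewise for `B`.
On the other hand `A_Xz, B_Xz` are disjoint, as are `A_Yz, B_Yz`, and an `x`-line inside `A`
meets every `y`-line inside `B`, so `A_Xz` or `B_Yz` is empty, and `B_Xz` or `A_Yz` is empty.
In each of the four cases two of the four bounds `≤ N` add up to the claim.
-/

open Finset

lemma le_add_of_sq_le_four_mul {u v c : ℝ} (hu : 0 ≤ u) (hv : 0 ≤ v) (h : c ^ 2 ≤ 4 * u * v) :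
    c ≤ u + v :=
  abs_le_of_sq_le_sq' (h.trans (four_mul_le_sq_add u v)) (add_nonneg hu hv) |>.2

section Lines

variable {α β γ : Type*} [Fintype α] [Fintype β] [DecidableEq α] [DecidableEq β] [DecidableEq γ]

def projXY (S : Finset (α × β × γ)) : Finset (α × β) :=
  S.image fun p => (p.1, p.2.1)

def xLines (S : Finset (α × β × γ)) (z : γ) : Finset α :=
  univ.filter fun x => ∀ y, (x, y, z) ∈ S

def yLines (S : Finset (α × β × γ)) (z : γ) : Finset β :=
  univ.filter fun y => ∀ x, (x, y, z) ∈ S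

@[simp]
lemma mem_xLines {S : Finset (α × β × γ)} {z : γ} {x : α} :
    x ∈ xLines S z ↔ ∀ y, (x, y, z) ∈ S := by
  simp [xLines]

@[simp]
lemma mem_yLines {S : Finset (α × β × γ)} {z : γ} {y : β} :
    y ∈ yLines S z ↔ ∀ x, (x, y, z) ∈ S := by
  simp [yLines]

lemma xLines_product_univ_union_univ_product_yLines_subset (S : Finset (α × β × γ)) (z : γ) :
    xLines S z ×ˢ univ ∪ univ ×ˢ yLines S z ⊆ projXY S := by
  rintro ⟨x, y⟩ hxy
  simp only [mem_union, mem_product, mem_xLines, mem_yLines, mem_univ, and_true,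
    true_and] at hxy
  refine mem_image.2 ⟨(x, y, z), ?_, rfl⟩
  rcases hxy with hx | hy
  exacts [hx y, hy x]

lemma card_xLines_mul_add_mul_card_yLines_le (S : Finset (α × β × γ)) (z : γ) :
    #(xLines S z) * Fintype.card β + Fintype.card α * #(yLines S z) ≤
      #(projXY S) + #(xLines S z) * #(yLines S z) := by
  have hcross := card_union_add_card_inter (xLines S z ×ˢ (univ : Finset β))
    ((univ : Finset α) ×ˢ yLines S z)
  rw [product_inter_product, inter_univ, univ_inter] at hcross
  simp only [card_product, card_univ] at hcross
  have := card_le_card (xLines_product_univ_union_univ_product_yLines_subset S z)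
  omega

lemma disjoint_xLines [Nonempty β] {S T : Finset (α × β × γ)} (h : Disjoint S T) (z : γ) :
    Disjoint (xLines S z) (xLines T z) := by
  obtain ⟨y⟩ := ‹Nonempty β›
  exact disjoint_left.2 fun _ hS hT => disjoint_left.1 h (mem_xLines.1 hS y) (mem_xLines.1 hT y)

lemma disjoint_yLines [Nonempty α] {S T : Finset (α × β × γ)} (h : Disjoint S T) (z : γ) :
    Disjoint (yLines S z) (yLines T z) := by
  obtain ⟨x⟩ := ‹Nonempty α›
  exact disjoint_left.2 fun _ hS hT => disjoint_left.1 h (mem_yLines.1 hS x) (mem_yLines.1 hT x)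

lemma xLines_eq_empty_or_yLines_eq_empty {S T : Finset (α × β × γ)} (h : Disjoint S T)
    (z : γ) : xLines S z = ∅ ∨ yLines T z = ∅ := by
  by_contra! hne
  obtain ⟨⟨x, hx⟩, ⟨y, hy⟩⟩ := hne
  exact disjoint_left.1 h (mem_xLines.1 hx y) (mem_yLines.1 hy x)

end Lines

lemma card_xLines_add_card_yLines_le {α γ : Type*} [Fintype α] [DecidableEq α] [DecidableEq γ]
    (S : Finset (α × α × γ)) (z : γ)
    (hS : (#(projXY S) : ℝ) ≤ 3 / 4 * Fintype.card α ^ 2) :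
    #(xLines S z) + #(yLines S z) ≤ Fintype.card α := by
  have hcross : (#(xLines S z) * Fintype.card α + Fintype.card α * #(yLines S z) : ℝ) ≤
      #(projXY S) + #(xLines S z) * #(yLines S z) := by
    exact_mod_cast card_xLines_mul_add_mul_card_yLines_le S z
  have hx : (#(xLines S z) : ℝ) ≤ Fintype.card α := by exact_mod_cast card_le_univ _
  have hy : (#(yLines S z) : ℝ) ≤ Fintype.card α := by exact_mod_cast card_le_univ _
  have := le_add_of_sq_le_four_mul (sub_nonneg.2 hx) (sub_nonneg.2 hy)
    (c := Fintype.card α) (by nlinarith)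
  exact_mod_cast (by linarith : (#(xLines S z) + #(yLines S z) : ℝ) ≤ Fintype.card α)

lemma card_add_card_le_card_univ {α : Type*} [Fintype α] [DecidableEq α] {s t : Finset α}
    (h : Disjoint s t) : #s + #t ≤ Fintype.card α :=
  card_union_of_disjoint h ▸ card_le_univ _

theorem slice_pure_sets_bound_general (N : ℕ)
    (A B : Finset (Fin N × Fin N × Fin N))
    (hdisj : Disjoint A B)
    (hA : ((A.image (fun p => (p.1, p.2.1))).card : ℝ) ≤ (3/4 : ℝ) * N ^ 2)
    (hB : ((B.image (fun p => (p.1, p.2.1))).card : ℝ) ≤ (3/4 : ℝ) * N ^ 2)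
    (z : Fin N) :
    (Finset.univ.filter (fun x : Fin N => ∀ y : Fin N, (x, y, z) ∈ A)).card +
    (Finset.univ.filter (fun x : Fin N => ∀ y : Fin N, (x, y, z) ∈ B)).card +
    (Finset.univ.filter (fun y : Fin N => ∀ x : Fin N, (x, y, z) ∈ A)).card +
    (Finset.univ.filter (fun y : Fin N => ∀ x : Fin N, (x, y, z) ∈ B)).card ≤ N := by
  -- `convert`: the statement decides `∀ y : Fin N` by `Nat.decidableForallFin`, not by the
  -- `Fintype` instance used in `xLines`.
  suffices #(xLines A z) + #(xLines B z) + #(yLines A z) + #(yLines B z) ≤ N by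
    unfold xLines yLines at this; convert this
  have : Nonempty (Fin N) := ⟨z⟩
  have hX := card_add_card_le_card_univ (disjoint_xLines hdisj z)
  have hY := card_add_card_le_card_univ (disjoint_yLines hdisj z)
  have hA' := card_xLines_add_card_yLines_le A z (by rwa [Fintype.card_fin])
  have hB' := card_xLines_add_card_yLines_le B z (by rwa [Fintype.card_fin])
  simp only [Fintype.card_fin] at hX hY hA' hB'
  rcases xLines_eq_empty_or_yLines_eq_empty hdisj z with hAB | hAB <;>
    rcases xLines_eq_empty_or_yLines_eq_empty hdisj.symm z with hBA | hBA <;>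
    simp only [hAB, hBA, card_empty] at * <;> omega

/-- If `A, B` partition `[N]³` and both XY-projections have size at most `(3/4)N²`,
then for every `z`, `|A_Xz| + |B_Xz| + |A_Yz| + |B_Yz| ≤ N`. -/
theorem slice_pure_sets_bound (N : ℕ) (hN : 0 < N)
    (A B : Finset (Fin N × Fin N × Fin N))
    (hdisj : Disjoint A B) (hcover : A ∪ B = Finset.univ)
    (hA : ((A.image (fun p => (p.1, p.2.1))).card : ℝ) ≤ (3/4 : ℝ) * N ^ 2)
    (hB : ((B.image (fun p => (p.1, p.2.1))).card : ℝ) ≤ (3/4 : ℝ) * N ^ 2)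
    (z : Fin N) :
    (Finset.univ.filter (fun x : Fin N => ∀ y : Fin N, (x, y, z) ∈ A)).card +
    (Finset.univ.filter (fun x : Fin N => ∀ y : Fin N, (x, y, z) ∈ B)).card +
    (Finset.univ.filter (fun y : Fin N => ∀ x : Fin N, (x, y, z) ∈ A)).card +
    (Finset.univ.filter (fun y : Fin N => ∀ x : Fin N, (x, y, z) ∈ B)).card ≤ N :=
  slice_pure_sets_bound_general N A B hdisj hA hB z
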